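/- For natural numbers r and m with r ≤ m − 1, the dual code of RM(r,m) with respect to the bilinear form ⟨u,v⟩ = ∑_{x ∈ (ZMod 2)^m} u(x)·v(x) equals RM(m−r−1, m); that is, a function v : (ZMod 2)^m → ZMod 2 satisfies ⟨u,v⟩ = 0 for all u ∈ RM(r,m) if and only if v ∈ RM(m−r−1,m). -/

import Mathlib

/-!
Write a function `v : 𝔽₂^m → 𝔽₂` in algebraic normal form `v = ∑_S c_S x^S`, where
`x^S = ∏_{i ∈ S} x_i`. Because `x_i² = x_i`, the sum `∑_x x^S x^T` is `1` when `S ∪ T` covers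
all coordinates and `0` otherwise, so pairing `v` with `x^{S₀ᶜ}` gives `∑_{S ⊇ S₀} c_S`. For
`S₀` of maximal size with `c_{S₀} ≠ 0` this is `c_{S₀}`; since `x^{S₀ᶜ}` has degree `m - |S₀|`,
orthogonality to `RM(r, m)` forces `|S₀| ≤ m - r - 1`. Conversely, the product of codewords of
`RM(r, m)` and `RM(m - r - 1, m)` is the evaluation of a polynomial of degree `< m`, and such
evaluations sum to zero over `𝔽₂^m` (the lemma behind Chevalley–Warning).
-/

open MvPolynomial

/-- The Reed–Muller code `RM(r, m)`: the `𝔽₂`-linear subspace of functions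
`(ZMod 2)^m → ZMod 2` consisting of evaluation vectors of `m`-variate polynomials over
`ZMod 2` of total degree at most `r`. -/
def RM (r m : ℕ) : Submodule (ZMod 2) ((Fin m → ZMod 2) → ZMod 2) where
  carrier := {f | ∃ p : MvPolynomial (Fin m) (ZMod 2),
    p.totalDegree ≤ r ∧ ∀ x, f x = eval x p}
  zero_mem' := ⟨0, by simp, by simp⟩
  add_mem' := by
    rintro f g ⟨p, hp, hf⟩ ⟨q, hq, hg⟩
    exact ⟨p + q, le_trans (totalDegree_add p q) (max_le hp hq),
      fun x => by simp [hf x, hg x]⟩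
  smul_mem' := by
    rintro c f ⟨p, hp, hf⟩
    refine ⟨c • p, le_trans (totalDegree_smul_le c p) hp, fun x => by simp [hf x]⟩

open Finset

section AlgebraicNormalForm

variable {σ : Type*} [Fintype σ] [DecidableEq σ]

lemma prod_mul_prod_eq_prod_union (x : σ → ZMod 2) (S T : Finset σ) :
    (∏ i ∈ S, x i) * ∏ i ∈ T, x i = ∏ i ∈ S ∪ T, x i := by
  have hidem : ∀ b : ZMod 2, b * b = b := by decide
  rw [← Fintype.prod_ite_mem S, ← Fintype.prod_ite_mem T, ← Fintype.prod_ite_mem (S ∪ T),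
    ← prod_mul_distrib]
  refine prod_congr rfl fun i _ => ?_
  by_cases hS : i ∈ S <;> by_cases hT : i ∈ T <;> simp [hS, hT, hidem]

lemma sum_prod_eq_ite (S : Finset σ) :
    ∑ x : σ → ZMod 2, ∏ i ∈ S, x i = if S = univ then 1 else 0 := by
  have hfactor : ∀ i, ∑ b : ZMod 2, (if i ∈ S then b else 1) = if i ∈ S then 1 else 0 := by
    intro i
    split_ifs <;> decide
  calc ∑ x : σ → ZMod 2, ∏ i ∈ S, x i
      = ∑ x : σ → ZMod 2, ∏ i, if i ∈ S then x i else 1 := by simp only [Fintype.prod_ite_mem]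
    _ = ∏ i, ∑ b : ZMod 2, if i ∈ S then b else 1 := by rw [Fintype.prod_sum]
    _ = if S = univ then 1 else 0 := by
        simp only [hfactor, Fintype.prod_boole, eq_univ_iff_forall]

lemma sum_prod_mul_prod (S T : Finset σ) :
    ∑ x : σ → ZMod 2, (∏ i ∈ S, x i) * ∏ i ∈ T, x i = if S ∪ T = univ then 1 else 0 := by
  simp only [prod_mul_prod_eq_prod_union, sum_prod_eq_ite]

/-- Read off from `v x = ∑ y, v y * ∏ i, (x i + 1 + y i)` by expanding the product. -/
def anfCoeff (v : (σ → ZMod 2) → ZMod 2) (S : Finset σ) : ZMod 2 :=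
  ∑ y, v y * ∏ i ∈ Sᶜ, (1 + y i)

lemma sum_anfCoeff_mul_prod (v : (σ → ZMod 2) → ZMod 2) (x : σ → ZMod 2) :
    ∑ S, anfCoeff v S * ∏ i ∈ S, x i = v x := by
  have hdelta : ∀ y, ∏ i, (x i + (1 + y i)) = if y = x then 1 else 0 := by
    intro y
    have hab : ∀ a b : ZMod 2, a + (1 + b) = if b = a then 1 else 0 := by decide
    simp only [hab, Fintype.prod_boole, funext_iff]
  calc ∑ S, anfCoeff v S * ∏ i ∈ S, x i
      = ∑ y, v y * ∑ S, (∏ i ∈ S, x i) * ∏ i ∈ Sᶜ, (1 + y i) := by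
        simp only [anfCoeff, sum_mul, mul_sum]
        rw [sum_comm]
        exact sum_congr rfl fun _ _ => sum_congr rfl fun _ _ => by ring
    _ = ∑ y, v y * ∏ i, (x i + (1 + y i)) := by
        simp only [prod_add, powerset_univ, compl_eq_univ_sdiff]
    _ = v x := by simp [hdelta]

lemma sum_prod_compl_mul_eq_sum_superset (v : (σ → ZMod 2) → ZMod 2) (S₀ : Finset σ) :
    ∑ x, (∏ i ∈ S₀ᶜ, x i) * v x = ∑ S with S₀ ⊆ S, anfCoeff v S := by
  have hcover : ∀ S, S₀ᶜ ∪ S = univ ↔ S₀ ⊆ S := by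
    intro S
    simp [eq_univ_iff_forall, subset_iff, or_iff_not_imp_left]
  simp_rw [← sum_anfCoeff_mul_prod v, mul_sum]
  rw [sum_comm, sum_filter]
  refine sum_congr rfl fun S _ => ?_
  simp_rw [mul_left_comm _ (anfCoeff v S), ← mul_sum, sum_prod_mul_prod, hcover, mul_ite,
    mul_one, mul_zero]

end AlgebraicNormalForm

section ReedMuller

variable {m : ℕ}

lemma prod_mem_RM {k : ℕ} {S : Finset (Fin m)} (hS : #S ≤ k) :
    (fun x => ∏ i ∈ S, x i) ∈ RM k m :=
  ⟨∏ i ∈ S, X i, (totalDegree_finsetProd _ _).trans (by simpa [totalDegree_X] using hS),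
    fun x => by simp⟩

lemma mem_RM_of_anfCoeff_ne_zero {k : ℕ} {v : (Fin m → ZMod 2) → ZMod 2}
    (hv : ∀ S, anfCoeff v S ≠ 0 → #S ≤ k) : v ∈ RM k m := by
  have hexpand : v = ∑ S, anfCoeff v S • fun x => ∏ i ∈ S, x i := by
    ext x
    simp [sum_anfCoeff_mul_prod]
  rw [hexpand]
  refine Submodule.sum_mem _ fun S _ => ?_
  by_cases hS : anfCoeff v S = 0
  · simp [hS]
  · exact Submodule.smul_mem _ _ (prod_mem_RM (hv S hS))

lemma sum_mul_eq_zero_of_mem_RM {a b : ℕ} {u v : (Fin m → ZMod 2) → ZMod 2}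
    (hu : u ∈ RM a m) (hv : v ∈ RM b m) (hab : a + b < m) : ∑ x, u x * v x = 0 := by
  obtain ⟨p, hp, hpu⟩ := hu
  obtain ⟨q, hq, hqv⟩ := hv
  simp only [hpu, hqv, ← eval_mul]
  refine sum_eval_eq_zero _ ((totalDegree_mul p q).trans_lt ?_)
  simp only [ZMod.card, Fintype.card_fin]
  omega

lemma mem_RM_of_forall_sum_mul_eq_zero {r : ℕ} {v : (Fin m → ZMod 2) → ZMod 2}
    (hv : ∀ u ∈ RM r m, ∑ x, u x * v x = 0) : v ∈ RM (m - r - 1) m := by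
  refine mem_RM_of_anfCoeff_ne_zero fun S hS => ?_
  by_contra hlarge
  obtain ⟨S₀, hS₀, hmax⟩ :=
    exists_max_image {S | anfCoeff v S ≠ 0} card ⟨S, by simpa using hS⟩
  have hS₀S := hmax S (by simpa using hS)
  have htop : ∑ T with S₀ ⊆ T, anfCoeff v T = anfCoeff v S₀ := by
    refine sum_eq_single_of_mem S₀ (by simp) fun T hT hne => ?_
    by_contra hT0
    exact hne (eq_of_subset_of_card_le (mem_filter.1 hT).2 (hmax T (by simpa using hT0))).symm
  have hcompl : #S₀ᶜ ≤ r := by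
    rw [card_compl, Fintype.card_fin]
    omega
  have horth := hv _ (prod_mem_RM hcompl)
  rw [sum_prod_compl_mul_eq_sum_superset, htop] at horth
  exact (mem_filter.1 hS₀).2 horth

end ReedMuller

theorem stmt_3 (r m : ℕ) (h : r + 1 ≤ m) (v : (Fin m → ZMod 2) → ZMod 2) :
    (∀ u ∈ RM r m, ∑ x : Fin m → ZMod 2, u x * v x = 0) ↔ v ∈ RM (m - r - 1) m :=
  ⟨mem_RM_of_forall_sum_mul_eq_zero,
    fun hv _ hu => sum_mul_eq_zero_of_mem_RM hu hv (by omega)⟩
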